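/- For every ζ < ω₁, the pointed structures (N, (0, x₀)) and (N, (0, x₁)) are EF_ζ-equivalent: the isomorphism player wins the Ehrenfeucht–Fraïssé game of length ζ. Consequently there exist non-isomorphic structures of cardinality ℵ₁ that are EF_ζ-equivalent for every ζ < ω₁. -/

import Mathlib

noncomputable section
open Set

/-- `G` is the vector space over `ℤ/2ℤ` with basis indexed by `ℕ`. -/
abbrev G : Type := ℕ →₀ ZMod 2

/-- The basis element `xₙ`. -/
def xg (n : ℕ) : G := Finsupp.single n 1

/-- `G⁰ₙ`: the subspace generated by the `x_k` for `k ≠ n`. -/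
def G0 (n : ℕ) : Set G :=
  (Submodule.span (ZMod 2) {y : G | ∃ k : ℕ, k ≠ n ∧ y = xg k} : Submodule (ZMod 2) G)

/-- `G¹ₙ = xₙ + G⁰ₙ`, the nontrivial coset. -/
def G1 (n : ℕ) : Set G := (fun z => xg n + z) '' G0 n

/-- The family `𝒢 = {Gˡₙ : n < ω, l ∈ {0,1}}`. -/
def Gfam : Set (Set G) := {S | ∃ n : ℕ, S = G0 n ∨ S = G1 n}

/-- The first uncountable ordinal. -/
def omega1 : Ordinal := (Cardinal.aleph 1).ord

/-- The universe of the structure `M`: elements of the parts `A_α = {α} × G`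
and of the parts `B_α ⊆ {η : α → 𝒢}` (sequences are padded by `∅` beyond `α`). -/
inductive MU : Type 1 where
  | a : Ordinal → G → MU
  | b : Ordinal → (Ordinal → Set G) → MU

/-- The condition for `η` (as a total function, padded by `∅`) to code a member of `B_α`:
its values below `α` are in `𝒢` and for some `n` it equals `G⁰ₙ` with finitely many
exceptions. -/
def okB (α : Ordinal) (η : Ordinal → Set G) : Prop :=
  (∀ β, β < α → η β ∈ Gfam) ∧ (∀ β, ¬ β < α → η β = ∅) ∧
    ∃ n : ℕ, {β : Ordinal | β < α ∧ η β ≠ G0 n}.Finite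

/-- The universe of `M_{<γ}`, i.e. `∪ {A_β ∪ B_β : β < γ}`. -/
def MUuniv (γ : Ordinal) : Set MU :=
  {u | match u with
       | .a α _ => α < γ
       | .b α η => α < γ ∧ okB α η}

/-- `u` belongs to the `A`-part (the predicate `P₁`; `P₂` is its negation). -/
def isA : MU → Prop
  | .a _ _ => True
  | .b _ _ => False

/-- The index `α` of the part `A_α` or `B_α` containing the element. -/
def idx : MU → Ordinal
  | .a α _ => α
  | .b α _ => α

/-- The relation `E₁`. -/
def E1 (u v : MU) : Prop := isA u ∧ isA v ∧ idx u ≤ idx v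

/-- The relation `E₂`. -/
def E2 (u v : MU) : Prop := ¬ isA u ∧ ¬ isA v ∧ idx u ≤ idx v

/-- The unary function `F_y`: translation by `y` on each `A_α`, identity on each `B_α`. -/
def Fy (y : G) : MU → MU
  | .a α g => .a α (g + y)
  | .b α η => .b α η

/-- The relation `R = {(η, (α,x)) : α < lh η, x ∈ η(α)}`. -/
def Rmem (u v : MU) : Prop :=
  ∃ (β : Ordinal) (η : Ordinal → Set G) (α : Ordinal) (g : G),
    u = .b β η ∧ v = .a α g ∧ α < β ∧ g ∈ η α

/-- `f` is an automorphism of the restriction of `M` to the set `S`. -/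
structure IsAut (S : Set MU) (f : MU → MU) : Prop where
  bij : Set.BijOn f S S
  p1 : ∀ u ∈ S, (isA (f u) ↔ isA u)
  e1 : ∀ u ∈ S, ∀ v ∈ S, (E1 (f u) (f v) ↔ E1 u v)
  e2 : ∀ u ∈ S, ∀ v ∈ S, (E2 (f u) (f v) ↔ E2 u v)
  fy : ∀ (y : G), ∀ u ∈ S, f (Fy y u) = Fy y (f u)
  r : ∀ u ∈ S, ∀ v ∈ S, (Rmem (f u) (f v) ↔ Rmem u v)

/-- The map `f_ν`: translation by `ν(α)` on `A_α`, coset translation on the `B`-parts. -/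
def fnu (ν : Ordinal → G) : MU → MU
  | .a α g => .a α (g + ν α)
  | .b α η => .b α (fun β => (fun z => ν β + z) '' η β)

/-- The support-finiteness condition on `ν : γ → G`:
for every `β < γ` and every `n`, `{α < β : n ∈ supp ν(α)}` is finite. -/
def SuppFin (γ : Ordinal) (ν : Ordinal → G) : Prop :=
  ∀ β < γ, ∀ n : ℕ, {α : Ordinal | α < β ∧ n ∈ (ν α).support}.Finite

/-- The relation `R₁` of the expansion `M_p`, for the parameter sequence
`p = ⟨(β_α, g_α) : α < ω₁⟩`:
`R₁ = {((β_α, y₂), (α, y₁)) : α < ω₁, g_α(y₁) = y₂}`. -/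
def R1 (βf : Ordinal → Ordinal) (gf : Ordinal → (G →+ G)) (u v : MU) : Prop :=
  ∃ (α : Ordinal) (y₁ y₂ : G),
    α < omega1 ∧ v = .a α y₁ ∧ u = .a (βf α) y₂ ∧ gf α y₁ = y₂

/-- `f` is an automorphism of the restriction of the expansion `M_p` to `S`. -/
structure IsAutP (βf : Ordinal → Ordinal) (gf : Ordinal → (G →+ G))
    (S : Set MU) (f : MU → MU) extends IsAut S f : Prop where
  r1 : ∀ u ∈ S, ∀ v ∈ S, (R1 βf gf (f u) (f v) ↔ R1 βf gf u v)
/-- `p` is a partial isomorphism of the restriction of the expansion `M_p`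
(with the extra relation `R₁`) to `S`. -/
def PartIsoP (βf : Ordinal → Ordinal) (gf : Ordinal → (G →+ G))
    (S : Set MU) (p : Set (MU × MU)) : Prop :=
  (∀ q ∈ p, q.1 ∈ S ∧ q.2 ∈ S) ∧
  (∀ q ∈ p, ∀ q' ∈ p, (q.1 = q'.1 ↔ q.2 = q'.2)) ∧
  (∀ q ∈ p, (isA q.1 ↔ isA q.2)) ∧
  (∀ q ∈ p, ∀ q' ∈ p, (E1 q.1 q'.1 ↔ E1 q.2 q'.2)) ∧
  (∀ q ∈ p, ∀ q' ∈ p, (E2 q.1 q'.1 ↔ E2 q.2 q'.2)) ∧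
  (∀ q ∈ p, ∀ q' ∈ p, ∀ y : G, (q'.1 = Fy y q.1 ↔ q'.2 = Fy y q.2)) ∧
  (∀ q ∈ p, ∀ q' ∈ p, (Rmem q.1 q'.1 ↔ Rmem q.2 q'.2)) ∧
  (∀ q ∈ p, ∀ q' ∈ p, (R1 βf gf q.1 q'.1 ↔ R1 βf gf q.2 q'.2))

/-- The isomorphism player has a winning strategy in the Ehrenfeucht–Fraïssé
game of length `ζ` on the pointed structures `(M_p ↾ S, a₁)`, `(M_p ↾ S, a₂)`:
a strategy produces, depending only on the adversary's earlier moves, an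
increasing continuous chain of partial isomorphisms starting with `{(a₁,a₂)}`
and covering each element chosen by the adversary in the preceding round. -/
def ISOWinsP (βf : Ordinal → Ordinal) (gf : Ordinal → (G →+ G))
    (S : Set MU) (a₁ a₂ : MU) (ζ : Ordinal) : Prop :=
  ∃ σ : Ordinal → (Ordinal → Bool × MU) → Set (MU × MU),
    (∀ ε mv mv', (∀ δ < ε, mv δ = mv' δ) → σ ε mv = σ ε mv') ∧
    ∀ mv : Ordinal → Bool × MU, (∀ δ < ζ, (mv δ).2 ∈ S) →
      σ 0 mv = {(a₁, a₂)} ∧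
      (∀ ε ≤ ζ, PartIsoP βf gf S (σ ε mv)) ∧
      (∀ ε ε', ε ≤ ε' → ε' ≤ ζ → σ ε mv ⊆ σ ε' mv) ∧
      (∀ ε ≤ ζ, Order.IsSuccLimit ε → σ ε mv = ⋃ ξ < ε, σ ξ mv) ∧
      (∀ ε < ζ, if (mv ε).1 then ∃ d, ((mv ε).2, d) ∈ σ (ε + 1) mv
                else ∃ c, (c, (mv ε).2) ∈ σ (ε + 1) mv)

/-!
The isomorphism player answers with the maps `f_ν`, which translate the level `A_β` by
`ν(β)` and each `B`-sequence coordinatewise. Every level `β` reached so far receives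
`ν(β) = x_{2k} + x_{2k+1}`, where `k` codes injectively the first round whose move reaches
level `β` together with the position of `β` in a fixed enumeration of that countable
level; `ν(0) = x₀ + x₁` sends `(0, x₀)` to `(0, x₁)`, `H` sends every `ν(β)` to
`x₀ + x₁` so `R₁` is respected, and as `ν` is injective each coordinate is moved at most
once, so `B`-elements stay in `B`. Since later rounds never change `ν` on levels already
reached, the partial isomorphisms form a continuous chain.

An automorphism sending `(0, x₀)` to `(0, x₁)` would instead translate every level `α`
by some `c_α` with `H c_α = c_0 ≠ 0`. Mapping the element of `B_α` that is constantly
`G⁰ₙ` shows that below any `α < ω₁` only finitely many `c_β` have `n`-th coordinate `1`,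
so each set `{β : c_β(n) = 1}` is countable, and `ω₁` would be a countable union of them.
-/

lemma G.add_self_eq_zero (y : G) : y + y = 0 := by
  ext n; simp [CharTwo.add_self_eq_zero]

lemma G.add_add_cancel_left (y z : G) : y + (y + z) = z := by
  rw [← add_assoc, G.add_self_eq_zero, zero_add]

def coordEq (n : ℕ) (c : ZMod 2) : Set G := {y | y n = c}

lemma G0_eq_coordEq (n : ℕ) : G0 n = coordEq n 0 := by
  have hgen : {y : G | ∃ k, k ≠ n ∧ y = xg k} =
      (fun k => Finsupp.single k 1) '' {k | k ≠ n} := by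
    ext y; simp [xg, eq_comm]
  ext y
  rw [G0, hgen, ← Finsupp.supported_eq_span_single, SetLike.mem_coe, Finsupp.mem_supported]
  simp [coordEq, Set.subset_def, not_imp_comm]

lemma image_add_coordEq (g : G) (n : ℕ) (c : ZMod 2) :
    (g + ·) '' coordEq n c = coordEq n (g n + c) := by
  ext y
  constructor
  · rintro ⟨z, hz, rfl⟩
    simp_all [coordEq]
  · intro hy
    refine ⟨g + y, ?_, G.add_add_cancel_left g y⟩
    simp_all [coordEq, ← add_assoc, CharTwo.add_self_eq_zero]

lemma G1_eq_coordEq (n : ℕ) : G1 n = coordEq n 1 := by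
  rw [G1, G0_eq_coordEq, image_add_coordEq]; simp [xg]

lemma mem_Gfam_iff {T : Set G} : T ∈ Gfam ↔ ∃ n c, T = coordEq n c := by
  simp only [Gfam, G0_eq_coordEq, G1_eq_coordEq, Set.mem_ofPred_eq]
  constructor
  · rintro ⟨n, h | h⟩ <;> exact ⟨n, _, h⟩
  · rintro ⟨n, c, rfl⟩
    fin_cases c
    exacts [⟨n, Or.inl rfl⟩, ⟨n, Or.inr rfl⟩]

lemma image_add_mem_Gfam (g : G) {T : Set G} (hT : T ∈ Gfam) : (g + ·) '' T ∈ Gfam := by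
  obtain ⟨n, c, rfl⟩ := mem_Gfam_iff.1 hT
  exact mem_Gfam_iff.2 ⟨n, _, image_add_coordEq g n c⟩

lemma eq_of_coordEq_subset_coordEq {n m : ℕ} {c d : ZMod 2}
    (h : coordEq n c ⊆ coordEq m d) : n = m ∧ c = d := by
  by_cases hnm : n = m
  · subst hnm
    have hc : Finsupp.single n c ∈ coordEq n c := by simp [coordEq]
    exact ⟨rfl, by simpa [coordEq] using h hc⟩
  · have hy : Finsupp.single n c + Finsupp.single m (d + 1) ∈ coordEq n c := by
      simp [coordEq, hnm]
    have := h hy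
    simp [coordEq, Ne.symm hnm] at this

def CoordFinite (ν : Ordinal → G) : Prop := ∀ n : ℕ, {β | ν β n ≠ 0}.Finite

section fnu

variable (ν : Ordinal → G)

@[simp] lemma idx_fnu (u : MU) : idx (fnu ν u) = idx u := by cases u <;> rfl

@[simp] lemma isA_fnu (u : MU) : isA (fnu ν u) ↔ isA u := by cases u <;> rfl

lemma fnu_involutive : Function.Involutive (fnu ν) := by
  rintro (⟨α, g⟩ | ⟨α, η⟩)
  · simp [fnu, add_assoc, G.add_self_eq_zero]
  · simp only [fnu, Set.image_image, G.add_add_cancel_left, Set.image_id']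

lemma fnu_Fy (y : G) (u : MU) : fnu ν (Fy y u) = Fy y (fnu ν u) := by
  cases u with
  | a α g => simp only [fnu, Fy, add_right_comm]
  | b α η => rfl

lemma Rmem_fnu_of_Rmem {u v : MU} (h : Rmem u v) : Rmem (fnu ν u) (fnu ν v) := by
  obtain ⟨β, η, α, g, rfl, rfl, hαβ, hg⟩ := h
  exact ⟨β, _, α, g + ν α, rfl, rfl, hαβ, g, hg, add_comm _ _⟩

lemma Rmem_fnu_iff (u v : MU) : Rmem (fnu ν u) (fnu ν v) ↔ Rmem u v :=
  ⟨fun h => by simpa only [fnu_involutive ν _] using Rmem_fnu_of_Rmem ν h,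
    Rmem_fnu_of_Rmem ν⟩

lemma E1_fnu_iff (u v : MU) : E1 (fnu ν u) (fnu ν v) ↔ E1 u v := by simp [E1]

lemma E2_fnu_iff (u v : MU) : E2 (fnu ν u) (fnu ν v) ↔ E2 u v := by simp [E2]

variable {ν}

lemma R1_fnu_of_R1 {H : G →+ G} {u v : MU} (hv : H (ν (idx v)) = ν 0)
    (h : R1 (fun _ => 0) (fun _ => H) u v) :
    R1 (fun _ => 0) (fun _ => H) (fnu ν u) (fnu ν v) := by
  obtain ⟨α, y₁, y₂, hα, rfl, rfl, rfl⟩ := h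
  exact ⟨α, y₁ + ν α, H y₁ + ν 0, hα, rfl, rfl, by rw [map_add, ← hv]; rfl⟩

lemma R1_fnu_iff {H : G →+ G} {u v : MU} (hv : H (ν (idx v)) = ν 0) :
    R1 (fun _ => 0) (fun _ => H) (fnu ν u) (fnu ν v) ↔ R1 (fun _ => 0) (fun _ => H) u v := by
  refine ⟨fun h => ?_, R1_fnu_of_R1 hv⟩
  have := R1_fnu_of_R1 (by rwa [idx_fnu]) h
  rwa [fnu_involutive ν u, fnu_involutive ν v] at this

lemma fnu_mem_MUuniv (hν : CoordFinite ν) {γ : Ordinal} {u : MU} (hu : u ∈ MUuniv γ) :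
    fnu ν u ∈ MUuniv γ := by
  cases u with
  | a α g => exact hu
  | b α η =>
    obtain ⟨hα, hfam, hempty, n, hfin⟩ := hu
    refine ⟨hα, fun β hβ => image_add_mem_Gfam _ (hfam β hβ),
      fun β hβ => by simp [hempty β hβ], n, (hfin.union (hν n)).subset ?_⟩
    rintro β ⟨hβα, hne⟩
    by_cases hG : η β = G0 n
    · refine Or.inr fun h0 => hne ?_
      simp only [hG, G0_eq_coordEq, image_add_coordEq, h0, zero_add]
    · exact Or.inl ⟨hβα, hG⟩

lemma fnu_congr {ν' : Ordinal → G} {γ : Ordinal} {u : MU} (hu : u ∈ MUuniv γ)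
    (h : ∀ β ≤ idx u, ν β = ν' β) : fnu ν u = fnu ν' u := by
  cases u with
  | a α g => simp [fnu, h α le_rfl]
  | b α η =>
    simp only [fnu, MU.b.injEq, true_and]
    funext β
    by_cases hβ : β < α
    · rw [h β hβ.le]
    · simp [hu.2.2.1 β hβ]

end fnu

lemma partIsoP_graph_fnu {H : G →+ G} {ν : Ordinal → G} {γ : Ordinal} {D : Set MU}
    (hν : CoordFinite ν) (hD : D ⊆ MUuniv γ) (hνH : ∀ u ∈ D, H (ν (idx u)) = ν 0) :
    PartIsoP (fun _ => 0) (fun _ => H) (MUuniv γ) ((fun u => (u, fnu ν u)) '' D) := by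
  simp only [PartIsoP, Set.forall_mem_image]
  refine ⟨fun u hu => ⟨hD hu, fnu_mem_MUuniv hν (hD hu)⟩,
    fun u _ v _ => (fnu_involutive ν).injective.eq_iff.symm,
    fun u _ => (isA_fnu ν u).symm, fun u _ v _ => (E1_fnu_iff ν u v).symm,
    fun u _ v _ => (E2_fnu_iff ν u v).symm, fun u _ v _ y => ?_,
    fun u _ v _ => (Rmem_fnu_iff ν u v).symm, fun u _ v hv => (R1_fnu_iff (hνH v hv)).symm⟩
  rw [← fnu_Fy, (fnu_involutive ν).injective.eq_iff]

universe u

lemma idx_lt_of_mem {γ : Ordinal} {u : MU} (hu : u ∈ MUuniv γ) : idx u < γ := by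
  cases u with
  | a α g => exact hu
  | b α η => exact hu.1

lemma omega1_pos : (0 : Ordinal) < omega1 := by
  rw [omega1, Cardinal.ord_aleph]
  exact Ordinal.omega_pos 1

lemma csInf_eq_csInf_of_agree_below {α : Type*} [ConditionallyCompleteLinearOrderBot α]
    [WellFoundedLT α] {s t : Set α} {ε : α} (hst : ∀ δ < ε, δ ∈ s ↔ δ ∈ t)
    (hs : ∃ δ ∈ s, δ < ε) : sInf s = sInf t := by
  obtain ⟨δ, hδs, hδε⟩ := hs
  have hs_mem : sInf s ∈ s := csInf_mem ⟨δ, hδs⟩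
  have hs_lt : sInf s < ε := (csInf_le' hδs).trans_lt hδε
  have ht_le : sInf t ≤ sInf s := csInf_le' ((hst _ hs_lt).1 hs_mem)
  have ht_mem : sInf t ∈ t := csInf_mem ⟨_, (hst _ hs_lt).1 hs_mem⟩
  exact le_antisymm (csInf_le' ((hst _ (ht_le.trans_lt hs_lt)).2 ht_mem)) ht_le

lemma countable_Iio_of_lt_omega1 {o : Ordinal.{u}} (ho : o < omega1) : (Iio o).Countable := by
  rw [← Cardinal.le_aleph0_iff_set_countable, Cardinal.mk_Iio_ordinal,
    ← Cardinal.lift_aleph0.{u + 1, u}, Cardinal.lift_le]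
  exact Cardinal.lt_aleph_one_iff.1 (Cardinal.lt_ord.1 ho)

lemma exists_injOn_Iic : ∃ J : Ordinal.{0} → Ordinal.{0} → ℕ,
    ∀ o < omega1, InjOn (J o) (Iic o) := by
  have : ∀ o : Ordinal.{0}, ∃ f : Ordinal.{0} → ℕ, o < omega1 → InjOn f (Iic o) := by
    intro o
    by_cases ho : o < omega1
    · obtain ⟨f, hf⟩ := countable_iff_exists_injOn.1 ((countable_Iio_of_lt_omega1 ho).insert o)
      exact ⟨f, fun _ => by rwa [Iio_insert] at hf⟩
    · exact ⟨0, fun h => absurd h ho⟩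
  choose J hJ using this
  exact ⟨J, hJ⟩

lemma mk_Iio_omega1 : Cardinal.mk (Iio (omega1 : Ordinal.{0})) = Cardinal.aleph 1 := by
  rw [Cardinal.mk_Iio_ordinal, omega1, Cardinal.card_ord, Cardinal.lift_aleph, Ordinal.lift_one]

lemma not_countable_Iio_omega1 : ¬ (Iio (omega1 : Ordinal.{0})).Countable := by
  rw [← Cardinal.le_aleph0_iff_set_countable, mk_Iio_omega1, not_le]
  exact Cardinal.aleph0_lt_aleph_one

def xPair (k : ℕ) : G := xg (2 * k) + xg (2 * k + 1)

lemma xPair_apply_eq_zero {k n : ℕ} (hn : n / 2 ≠ k) : xPair k n = 0 := by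
  simp only [xPair, xg, Finsupp.add_apply, Finsupp.single_apply]
  split_ifs <;> first | omega | simp

namespace IsoStrategy

variable (E : Ordinal.{u} → ℕ) (J : Ordinal.{0} → Ordinal.{0} → ℕ)
  (mv : Ordinal.{u} → Bool × MU)

def Covered (ε : Ordinal.{u}) (β : Ordinal.{0}) : Prop :=
  β = 0 ∨ ∃ δ < ε, β ≤ idx (mv δ).2

def coverTime (β : Ordinal.{0}) : Ordinal.{u} := sInf {δ | β ≤ idx (mv δ).2}

open Classical in
def pairIndex (β : Ordinal.{0}) : ℕ :=
  if β = 0 then 0 else Nat.pair (E (coverTime mv β)) (J (idx (mv (coverTime mv β)).2) β) + 1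

open Classical in
def shift (ε : Ordinal.{u}) (β : Ordinal.{0}) : G :=
  if Covered mv ε β then xPair (pairIndex E J mv β) else 0

/-- `fnu` is an involution, so for a move in the right structure this is its preimage. -/
def pick (δ : Ordinal.{u}) : MU :=
  if (mv δ).1 then (mv δ).2 else fnu (shift E J mv (δ + 1)) (mv δ).2

def domain (ε : Ordinal.{u}) : Set MU := insert (.a 0 (xg 0)) (pick E J mv '' Iio ε)

def strategy (ε : Ordinal.{u}) : Set (MU × MU) :=
  (fun u => (u, fnu (shift E J mv ε) u)) '' domain E J mv ε

structure Bookkeeping (ζ : Ordinal.{u}) : Prop where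
  injOn_rounds : InjOn E (Iio ζ)
  injOn_levels : ∀ o < omega1, InjOn (J o) (Iic o)
  legal : ∀ δ < ζ, (mv δ).2 ∈ MUuniv omega1

variable {E J mv}

lemma Covered.mono {ε ε' : Ordinal.{u}} {β : Ordinal.{0}} (h : ε ≤ ε')
    (hc : Covered mv ε β) : Covered mv ε' β :=
  hc.imp_right fun ⟨δ, hδ, hβ⟩ => ⟨δ, hδ.trans_le h, hβ⟩

lemma Covered.of_le {ε : Ordinal.{u}} {β β' : Ordinal.{0}} (h : β' ≤ β)
    (hc : Covered mv ε β) : Covered mv ε β' := by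
  rcases hc with rfl | ⟨δ, hδ, hβ⟩
  · exact Or.inl (nonpos_iff_eq_zero.1 h)
  · exact Or.inr ⟨δ, hδ, h.trans hβ⟩

lemma coverTime_spec {ε : Ordinal.{u}} {β : Ordinal.{0}} (h : ∃ δ < ε, β ≤ idx (mv δ).2) :
    coverTime mv β < ε ∧ β ≤ idx (mv (coverTime mv β)).2 := by
  obtain ⟨δ, hδ, hβ⟩ := h
  exact ⟨(csInf_le' (s := {δ | β ≤ idx (mv δ).2}) hβ).trans_lt hδ,
    csInf_mem (s := {δ | β ≤ idx (mv δ).2}) ⟨δ, hβ⟩⟩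

lemma shift_of_covered {ε : Ordinal.{u}} {β : Ordinal.{0}} (hc : Covered mv ε β) :
    shift E J mv ε β = xPair (pairIndex E J mv β) := if_pos hc

lemma shift_zero (ε : Ordinal.{u}) : shift E J mv ε 0 = xg 0 + xg 1 := by
  simp [shift_of_covered (Or.inl rfl : Covered mv ε 0), pairIndex, xPair]

lemma shift_stable {ε ε' : Ordinal.{u}} {β : Ordinal.{0}} (h : ε ≤ ε')
    (hc : Covered mv ε β) : shift E J mv ε' β = shift E J mv ε β := by
  rw [shift_of_covered hc, shift_of_covered (hc.mono h)]

lemma H_shift {H : G →+ G} (hH : ∀ k, H (xPair k) = xg 0 + xg 1) {ε : Ordinal.{u}}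
    {β : Ordinal.{0}} (hc : Covered mv ε β) : H (shift E J mv ε β) = shift E J mv ε 0 := by
  rw [shift_of_covered hc, hH, shift_zero]

lemma Bookkeeping.injOn_pairIndex {ζ : Ordinal.{u}} (hb : Bookkeeping E J mv ζ) :
    InjOn (pairIndex E J mv) {β | Covered mv ζ β} := by
  intro β hβ β' hβ' he
  by_cases h0 : β = 0 <;> by_cases h0' : β' = 0
  · rw [h0, h0']
  all_goals simp only [pairIndex, h0, h0', if_true, if_false] at he
  · omega
  · omega
  obtain ⟨hlt, hle⟩ := coverTime_spec (hβ.resolve_left h0)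
  obtain ⟨hlt', hle'⟩ := coverTime_spec (hβ'.resolve_left h0')
  obtain ⟨hE, hJ⟩ := Nat.pair_eq_pair.1 (Nat.succ_injective he)
  rw [hb.injOn_rounds hlt hlt' hE] at hJ hle
  exact hb.injOn_levels _ (idx_lt_of_mem (hb.legal _ hlt')) hle hle' hJ

lemma Bookkeeping.coordFinite_shift {ζ ε : Ordinal.{u}} (hb : Bookkeeping E J mv ζ)
    (hε : ε ≤ ζ) : CoordFinite (shift E J mv ε) := by
  have key : ∀ {β n}, shift E J mv ε β n ≠ 0 →
      Covered mv ζ β ∧ pairIndex E J mv β = n / 2 := by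
    intro β n hβ
    by_cases hc : Covered mv ε β
    · rw [shift_of_covered hc] at hβ
      exact ⟨hc.mono hε, by_contra fun hne => hβ (xPair_apply_eq_zero (Ne.symm hne))⟩
    · simp [shift, hc] at hβ
  intro n
  refine Set.Subsingleton.finite fun β hβ β' hβ' => ?_
  obtain ⟨hc, hk⟩ := key hβ
  obtain ⟨hc', hk'⟩ := key hβ'
  exact hb.injOn_pairIndex hc hc' (hk.trans hk'.symm)

lemma idx_pick (δ : Ordinal.{u}) : idx (pick E J mv δ) = idx (mv δ).2 := by
  unfold pick; split_ifs <;> simp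

lemma covered_of_mem_domain {ε : Ordinal.{u}} {u : MU} (hu : u ∈ domain E J mv ε)
    {β : Ordinal.{0}} (hβ : β ≤ idx u) : Covered mv ε β := by
  rcases hu with rfl | ⟨δ, hδ, rfl⟩
  · exact Covered.of_le hβ (Or.inl rfl)
  · exact Or.inr ⟨δ, hδ, hβ.trans (idx_pick δ).le⟩

lemma Bookkeeping.domain_subset {ζ ε : Ordinal.{u}} (hb : Bookkeeping E J mv ζ)
    (hε : ε ≤ ζ) : domain E J mv ε ⊆ MUuniv omega1 := by
  rintro u (rfl | ⟨δ, hδ, rfl⟩)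
  · exact omega1_pos
  · have hδζ : δ < ζ := lt_of_lt_of_le hδ hε
    unfold pick
    split_ifs
    · exact hb.legal δ hδζ
    · exact fnu_mem_MUuniv (hb.coordFinite_shift (Order.add_one_le_iff.2 hδζ))
        (hb.legal δ hδζ)

lemma domain_mono {ξ ε : Ordinal.{u}} (h : ξ ≤ ε) : domain E J mv ξ ⊆ domain E J mv ε :=
  insert_subset_insert (image_mono (Iio_subset_Iio h))

lemma Bookkeeping.fnu_shift_stable {ζ ξ ε : Ordinal.{u}} (hb : Bookkeeping E J mv ζ)
    (hξ : ξ ≤ ε) (hε : ε ≤ ζ) {u : MU} (hu : u ∈ domain E J mv ξ) :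
    fnu (shift E J mv ε) u = fnu (shift E J mv ξ) u :=
  fnu_congr (hb.domain_subset (hξ.trans hε) hu) fun _ hβ =>
    shift_stable hξ (covered_of_mem_domain hu hβ)

lemma Bookkeeping.strategy_mono {ζ ξ ε : Ordinal.{u}} (hb : Bookkeeping E J mv ζ)
    (hξ : ξ ≤ ε) (hε : ε ≤ ζ) : strategy E J mv ξ ⊆ strategy E J mv ε := by
  rintro _ ⟨u, hu, rfl⟩
  dsimp only
  rw [← hb.fnu_shift_stable hξ hε hu]
  exact mem_image_of_mem _ (domain_mono hξ hu)

lemma Bookkeeping.strategy_eq_iUnion {ζ ε : Ordinal.{u}} (hb : Bookkeeping E J mv ζ)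
    (hε : ε ≤ ζ) (hlim : Order.IsSuccLimit ε) :
    strategy E J mv ε = ⋃ ξ < ε, strategy E J mv ξ := by
  refine subset_antisymm ?_ (iUnion₂_subset fun ξ hξ => hb.strategy_mono hξ.le hε)
  rintro _ ⟨u, hu, rfl⟩
  obtain ⟨ξ, hξ, huξ⟩ : ∃ ξ < ε, u ∈ domain E J mv ξ := by
    rcases hu with rfl | ⟨δ, hδ, rfl⟩
    · exact ⟨0, hlim.pos, mem_insert _ _⟩
    · exact ⟨δ + 1, hlim.add_one_lt hδ,
        Or.inr ⟨δ, mem_Iio.2 (Order.lt_add_one_iff.2 le_rfl), rfl⟩⟩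
  dsimp only
  rw [hb.fnu_shift_stable hξ.le hε huξ]
  exact mem_iUnion₂.2 ⟨ξ, hξ, mem_image_of_mem _ huξ⟩

lemma strategy_zero : strategy E J mv 0 = {(.a 0 (xg 0), .a 0 (xg 1))} := by
  simp [strategy, domain, fnu, shift_zero, G.add_add_cancel_left]

lemma strategy_succ_covers_move (ε : Ordinal.{u}) :
    if (mv ε).1 then ∃ d, ((mv ε).2, d) ∈ strategy E J mv (ε + 1)
    else ∃ c, (c, (mv ε).2) ∈ strategy E J mv (ε + 1) := by
  have hpick : pick E J mv ε ∈ domain E J mv (ε + 1) :=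
    Or.inr ⟨ε, mem_Iio.2 (Order.lt_add_one_iff.2 le_rfl), rfl⟩
  unfold pick at hpick
  split_ifs at hpick ⊢
  · exact ⟨_, mem_image_of_mem _ hpick⟩
  · have := mem_image_of_mem (fun u => (u, fnu (shift E J mv (ε + 1)) u)) hpick
    exact ⟨_, by rwa [fnu_involutive] at this⟩

section Congr

variable {E : Ordinal.{u} → ℕ} {J : Ordinal.{0} → Ordinal.{0} → ℕ}
  {mv mv' : Ordinal.{u} → Bool × MU} {ε : Ordinal.{u}}

lemma covered_congr (h : ∀ δ < ε, mv δ = mv' δ) (β : Ordinal.{0}) :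
    Covered mv ε β ↔ Covered mv' ε β := by
  simp only [Covered]
  refine or_congr_right ⟨?_, ?_⟩ <;> rintro ⟨δ, hδ, hβ⟩
  exacts [⟨δ, hδ, h δ hδ ▸ hβ⟩, ⟨δ, hδ, (h δ hδ).symm ▸ hβ⟩]

lemma shift_congr (h : ∀ δ < ε, mv δ = mv' δ) : shift E J mv ε = shift E J mv' ε := by
  funext β
  by_cases hc : Covered mv ε β
  · rw [shift_of_covered hc, shift_of_covered ((covered_congr h β).1 hc)]
    by_cases h0 : β = 0
    · simp [pairIndex, h0]
    have hex := hc.resolve_left h0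
    have htime : coverTime mv β = coverTime mv' β :=
      csInf_eq_csInf_of_agree_below (fun δ hδ => by simp [h δ hδ])
        (hex.imp fun _ h => ⟨h.2, h.1⟩)
    simp only [pairIndex, h0, if_false, ← htime, h _ (coverTime_spec hex).1]
  · rw [shift, shift, if_neg hc, if_neg (mt (covered_congr h β).2 hc)]

lemma strategy_congr (h : ∀ δ < ε, mv δ = mv' δ) :
    strategy E J mv ε = strategy E J mv' ε := by
  have hpick : ∀ δ ∈ Iio ε, pick E J mv δ = pick E J mv' δ := fun δ hδ => by
    rw [pick, pick, h δ hδ, shift_congr fun δ' hδ' =>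
      h δ' (hδ'.trans_le (Order.add_one_le_iff.2 hδ))]
  rw [strategy, strategy, domain, domain, image_congr hpick, shift_congr h]

end Congr

end IsoStrategy

open IsoStrategy in
theorem isoWinsP_of_lt_omega1 {H : G →+ G} (hH : ∀ k, H (xPair k) = xg 0 + xg 1)
    {ζ : Ordinal.{u}} (hζ : ζ < omega1) :
    ISOWinsP (fun _ => 0) (fun _ => H) (MUuniv omega1) (.a 0 (xg 0)) (.a 0 (xg 1)) ζ := by
  obtain ⟨E, hE⟩ := Set.countable_iff_exists_injOn.1 (countable_Iio_of_lt_omega1 hζ)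
  obtain ⟨J, hJ⟩ := exists_injOn_Iic
  refine ⟨fun ε mv => strategy E J mv ε, fun ε mv mv' h => strategy_congr h,
    fun mv hmv => ?_⟩
  have hb : Bookkeeping E J mv ζ := ⟨hE, hJ, hmv⟩
  refine ⟨strategy_zero, fun ε hε => ?_, fun ε ε' h h' => hb.strategy_mono h h',
    fun ε hε hlim => hb.strategy_eq_iUnion hε hlim, fun ε _ => strategy_succ_covers_move ε⟩
  exact partIsoP_graph_fnu (hb.coordFinite_shift hε) (hb.domain_subset hε)
    fun u hu => H_shift hH (covered_of_mem_domain hu le_rfl)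

lemma Set.countable_of_forall_finite_lt {α : Type*} [LinearOrder α] {s : Set α}
    (h : ∀ a ∈ s, {b ∈ s | b < a}.Finite) : s.Countable := by
  refine Set.countable_iff_exists_injOn.2
    ⟨fun a => {b ∈ s | b < a}.ncard, StrictMonoOn.injOn ?_⟩
  intro a ha a' ha' haa'
  exact Set.ncard_lt_ncard ⟨fun b hb => ⟨hb.1, hb.2.trans haa'⟩,
    fun hsub => (hsub ⟨ha, haa'⟩).2.false⟩ (h a' ha')

lemma IsAut.exists_affine {f : MU → MU} (hf : IsAut (MUuniv omega1) f) :
    ∃ (g : Ordinal.{0} → Ordinal.{0}) (c : Ordinal.{0} → G), InjOn g (Iio omega1) ∧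
      ∀ α < omega1, ∀ y, f (.a α y) = .a (g α) (c α + y) := by
  have hA : ∀ α : Ordinal.{0}, ∃ β c, α < omega1 → f (.a α 0) = .a β c := fun α => by
    by_cases hα : α < omega1
    · have hA := (hf.p1 _ (show MU.a α 0 ∈ MUuniv omega1 from hα)).2 trivial
      cases hfa : f (.a α 0) with
      | a β c => exact ⟨β, c, fun _ => rfl⟩
      | b _ _ => rw [hfa] at hA; exact hA.elim
    · exact ⟨0, 0, fun h => absurd h hα⟩
  choose g c hgc using hA
  refine ⟨g, c, fun α hα α' hα' he => ?_, fun α hα y => ?_⟩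
  · have hle : ∀ {α α'}, α ∈ Iio omega1 → α' ∈ Iio omega1 → g α = g α' → α ≤ α' :=
      fun {α α'} hα hα' he => ((hf.e1 (.a α 0) hα (.a α' 0) hα').1 (by
        simp only [hgc α hα, hgc α' hα', he, E1, isA, idx, le_rfl, and_self])).2.2
    exact le_antisymm (hle hα hα' he) (hle hα' hα he.symm)
  · have hFy := hf.fy y _ (show MU.a α 0 ∈ MUuniv omega1 from hα)
    simp only [Fy, zero_add, hgc α hα] at hFy
    exact hFy

section Affine

variable {f : MU → MU} {g : Ordinal.{0} → Ordinal.{0}} {c : Ordinal.{0} → G}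

lemma IsAutP.H_translation_eq {H : G →+ G}
    (hf : IsAutP (fun _ => 0) (fun _ => H) (MUuniv omega1) f)
    (hfa : ∀ α < omega1, ∀ y, f (.a α y) = .a (g α) (c α + y)) {β : Ordinal.{0}}
    (hβ : β < omega1) : H (c β) = c 0 := by
  have hR : R1 (fun _ => 0) (fun _ => H) (.a 0 0) (.a β 0) :=
    ⟨β, 0, 0, hβ, rfl, rfl, map_zero H⟩
  obtain ⟨_, _, _, _, h1, h2, hH⟩ :=
    (hf.r1 (.a 0 0) omega1_pos (.a β 0) hβ).2 hR
  rw [hfa 0 omega1_pos, add_zero] at h2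
  rw [hfa β hβ, add_zero] at h1
  obtain ⟨-, rfl⟩ := MU.a.inj h1
  obtain ⟨-, rfl⟩ := MU.a.inj h2
  exact hH

lemma IsAut.image_b_eq_coordEq (hf : IsAut (MUuniv omega1) f)
    (hfa : ∀ α < omega1, ∀ y, f (.a α y) = .a (g α) (c α + y)) {α α' : Ordinal.{0}}
    {η η' : Ordinal.{0} → Set G} (hB : MU.b α η ∈ MUuniv omega1)
    (hfb : f (.b α η) = .b α' η') {β : Ordinal.{0}} (hβ : β < α) {n : ℕ} (hη : η β = G0 n) :
    g β < α' ∧ η' (g β) = coordEq n (c β n) := by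
  have hβ1 : β < omega1 := hβ.trans hB.1
  have hmem : ∀ y ∈ G0 n, g β < α' ∧ c β + y ∈ η' (g β) := by
    intro y hy
    obtain ⟨_, _, _, _, h1, h2, hlt, hmem⟩ :=
      (hf.r _ hB (.a β y) hβ1).2 ⟨α, η, β, y, rfl, rfl, hβ, hη ▸ hy⟩
    rw [hfb] at h1
    rw [hfa β hβ1] at h2
    cases h1; cases h2
    exact ⟨hlt, hmem⟩
  have h0 : (0 : G) ∈ G0 n := by simp [G0_eq_coordEq, coordEq]
  have hB' := hf.bij.mapsTo hB
  rw [hfb] at hB'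
  obtain ⟨m, d, hmd⟩ := mem_Gfam_iff.1 (hB'.2.1 _ (hmem 0 h0).1)
  have hsub : coordEq n (c β n) ⊆ coordEq m d := by
    rw [← hmd, ← add_zero (c β n), ← image_add_coordEq, ← G0_eq_coordEq]
    rintro _ ⟨y, hy, rfl⟩
    exact (hmem y hy).2
  obtain ⟨rfl, rfl⟩ := eq_of_coordEq_subset_coordEq hsub
  exact ⟨(hmem 0 h0).1, hmd⟩

lemma IsAut.finite_translation_support (hf : IsAut (MUuniv omega1) f) (hg : InjOn g (Iio omega1))
    (hfa : ∀ α < omega1, ∀ y, f (.a α y) = .a (g α) (c α + y)) {α : Ordinal.{0}}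
    (hα : α < omega1) (n : ℕ) : {β | β < α ∧ c β n ≠ 0}.Finite := by
  classical
  let η : Ordinal.{0} → Set G := fun β => if β < α then G0 n else ∅
  have hB : MU.b α η ∈ MUuniv omega1 :=
    ⟨hα, fun β hβ => ⟨n, Or.inl (if_pos hβ)⟩, fun β hβ => if_neg hβ,
      n, Set.finite_empty.subset fun β ⟨hβ, hne⟩ => hne (if_pos hβ)⟩
  obtain ⟨α', η', hfb⟩ : ∃ α' η', f (.b α η) = .b α' η' := by
    have hnA := (hf.p1 _ hB).not.2 id
    cases hfb : f (.b α η) with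
    | a _ _ => rw [hfb] at hnA; exact (hnA trivial).elim
    | b α' η' => exact ⟨α', η', rfl⟩
  have hB' := hf.bij.mapsTo hB
  rw [hfb] at hB'
  obtain ⟨k, hk⟩ := hB'.2.2.2
  refine Set.Finite.of_finite_image (hk.subset ?_) (hg.mono fun β hβ => hβ.1.trans hα)
  rintro _ ⟨β, ⟨hβ, hcβ⟩, rfl⟩
  obtain ⟨hlt, hη'⟩ := hf.image_b_eq_coordEq hfa hB hfb hβ (if_pos hβ)
  refine ⟨hlt, fun he => hcβ ?_⟩
  rw [hη', G0_eq_coordEq] at he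
  exact (eq_of_coordEq_subset_coordEq he.le).2

end Affine

theorem not_exists_isAutP (H : G →+ G) :
    ¬ ∃ f : MU → MU, IsAutP (fun _ => 0) (fun _ => H) (MUuniv omega1) f ∧
        f (.a 0 (xg 0)) = .a 0 (xg 1) := by
  rintro ⟨f, hf, hf0⟩
  obtain ⟨g, c, hg, hfa⟩ := hf.exists_affine
  have hc0 : c 0 ≠ 0 := by
    rw [hfa 0 omega1_pos] at hf0
    intro h
    rw [h, zero_add, MU.a.injEq] at hf0
    exact absurd (Finsupp.single_left_injective one_ne_zero hf0.2) zero_ne_one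
  have hsupp : Iio omega1 ⊆ ⋃ n, {β | β < omega1 ∧ c β n ≠ 0} := by
    intro β hβ
    have hcβ : c β ≠ 0 := fun h => hc0 (by rw [← hf.H_translation_eq hfa hβ, h, map_zero])
    obtain ⟨n, hn⟩ := DFunLike.ne_iff.1 hcβ
    exact mem_iUnion.2 ⟨n, hβ, hn⟩
  refine not_countable_Iio_omega1 ((Set.countable_iUnion fun n => ?_).mono hsupp)
  refine Set.countable_of_forall_finite_lt fun α hα => ?_
  exact (hf.finite_translation_support hg hfa hα.1 n).subset fun β hβ => ⟨hβ.2, hβ.1.2⟩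

lemma countable_Gfam : Gfam.Countable := by
  refine (countable_range fun p : ℕ × ZMod 2 => coordEq p.1 p.2).mono fun T hT => ?_
  obtain ⟨n, c, rfl⟩ := mem_Gfam_iff.1 hT
  exact ⟨(n, c), rfl⟩

lemma countable_okB {α : Ordinal.{0}} (hα : α < omega1) : {η | okB α η}.Countable := by
  have hsub : {η | okB α η} ⊆ ⋃ (n : ℕ), ⋃ F ∈ {F | Set.Finite F ∧ F ⊆ Iio α},
      {η | okB α η ∧ ∀ β < α, β ∉ F → η β = G0 n} := by
    intro η hη
    obtain ⟨n, hn⟩ := hη.2.2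
    refine mem_iUnion.2 ⟨n, mem_iUnion₂.2
      ⟨_, ⟨hn, fun β hβ => hβ.1⟩, hη, fun β hβ hβF => ?_⟩⟩
    by_contra hne
    exact hβF ⟨hβ, hne⟩
  refine (countable_iUnion fun n => (countable_ofPred_finite_subset
    (countable_Iio_of_lt_omega1 hα)).biUnion fun F hF => ?_).mono hsub
  have := hF.1.to_subtype
  refine Set.MapsTo.countable_of_injOn (f := fun η (β : F) => η β)
    (t := {φ : F → Set G | ∀ β, φ β ∈ Gfam})
    (fun η hη β => hη.1.1 β (hF.2 β.2)) (fun η hη η' hη' he => funext fun β => ?_)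
    (countable_pi fun _ => countable_Gfam)
  by_cases hβα : β < α
  · by_cases hβF : β ∈ F
    · exact congrFun he ⟨β, hβF⟩
    · rw [hη.2 β hβα hβF, hη'.2 β hβα hβF]
  · rw [hη.1.2.1 β hβα, hη'.1.2.1 β hβα]

lemma mk_MUuniv_omega1 : Cardinal.mk (MUuniv omega1) = Cardinal.aleph 1 := by
  refine le_antisymm ?_ ?_
  · have hsub : MUuniv omega1 ⊆ ⋃ α ∈ Iio (omega1 : Ordinal.{0}),
        range (MU.a α) ∪ MU.b α '' {η | okB α η} := by
      rintro (⟨α, y⟩ | ⟨α, η⟩) hu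
      · exact mem_biUnion hu (Or.inl ⟨y, rfl⟩)
      · exact mem_biUnion hu.1 (Or.inr ⟨η, hu.2, rfl⟩)
    calc Cardinal.mk (MUuniv omega1) ≤ _ := Cardinal.mk_le_mk_of_subset hsub
      _ ≤ _ := Cardinal.mk_biUnion_le _ _
      _ ≤ Cardinal.aleph 1 * Cardinal.aleph0 := by
        rw [mk_Iio_omega1]
        gcongr
        exact ciSup_le' fun α => Cardinal.le_aleph0_iff_set_countable.2
          ((countable_range _).union ((countable_okB α.2).image _))
      _ = Cardinal.aleph 1 := Cardinal.mul_aleph0_eq (Cardinal.aleph0_le_aleph 1)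
  · rw [← mk_Iio_omega1]
    exact Cardinal.mk_le_of_injective
      (f := fun α : Iio omega1 => (⟨.a α 0, α.2⟩ : MUuniv omega1))
      fun α β h => Subtype.ext (MU.a.inj (congrArg Subtype.val h)).1

/-- For every `ζ < ω₁`, the pointed structures `(N, (0, x₀))` and
`(N, (0, x₁))` (where `N = M_p` as in the previous statement) are
`EF_ζ`-equivalent: the isomorphism player wins the Ehrenfeucht–Fraïssé game of
length `ζ`. Consequently there exist non-isomorphic structures of cardinality
`ℵ₁` that are `EF_ζ`-equivalent for every `ζ < ω₁`: the two pointed structures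
above have universe of cardinality `ℵ₁` and are not isomorphic. -/
theorem stmt16 (h : ℕ → ℕ) (hh : ∀ n l : ℕ, l < 2 → h (2 * n + l) = l)
    (H : G →+ G) (hH : ∀ u : Finset ℕ, H (∑ n ∈ u, xg n) = ∑ n ∈ u, xg (h n)) :
    (∀ ζ < omega1,
      ISOWinsP (fun _ => 0) (fun _ => H) (MUuniv omega1)
        (.a 0 (xg 0)) (.a 0 (xg 1)) ζ) ∧
    (¬ ∃ f : MU → MU, IsAutP (fun _ => 0) (fun _ => H) (MUuniv omega1) f ∧
        f (.a 0 (xg 0)) = .a 0 (xg 1)) ∧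
    Cardinal.mk ↥(MUuniv omega1) = Cardinal.aleph 1 := by
  have hpair : ∀ k, H (xPair k) = xg 0 + xg 1 := fun k => by
    have hne : 2 * k ≠ 2 * k + 1 := by omega
    have h0 : h (2 * k) = 0 := by simpa using hh k 0 (by norm_num)
    rw [xPair, ← Finset.sum_pair hne, hH, Finset.sum_pair hne, h0, hh k 1 (by norm_num)]
  exact ⟨fun ζ hζ => isoWinsP_of_lt_omega1 hpair hζ, not_exists_isAutP H, mk_MUuniv_omega1⟩
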